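/- arXiv:2304.02022 — 2 statements merged into one kernel-verified Lean document; each statement's English description precedes it below -/
import Mathlib

section
/- Let customers choose according to an MNL model: given an assortment S (a subset of [N]) containing product i, each customer independently purchases product j ∈ S with probability v_j/(1 + Σ_{k∈S} v_k) and makes no purchase with probability 1/(1 + Σ_{k∈S} v_k), where v_j > 0 for all j. Suppose a (possibly random, history-dependent) sequence of assortments all containing product i is offered to a sequence of customers, and let μ_i be the number of no-purchase choices that occur strictly before the first purchase of product i. Then μ_i is geometrically distributed on {0,1,2,...} with P(μ_i = μ) = (1/(1+v_i))^μ · (v_i/(1+v_i)), and in particular E[μ_i] = 1/v_i. -/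
/-!
Conditionally on the history, a customer offered an assortment `S ∋ i` buys `i` with probability
`v i / (1 + V)` and makes no purchase with probability `1 / (1 + V)`, `V = ∑ k ∈ S, v k`. Hence on
every event determined by the first `n` choices, on which `i` is still unsold, the `n`-th customer
buys `i` exactly `v i` times as likely as nobody. Summing over `n` on the events "m no-purchases so
far" gives `P(μ = m) = v i * P(μ > m)`, i.e. `P(μ ≥ m) = (1 + v i) P(μ ≥ m + 1)`, which is the
geometric law. Product `i` is bought almost surely because every customer buys it with probability
at least `v i / (1 + ∑ k, v k)`.

No event is assumed measurable: the cylinder sets of histories are null-measurable because their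
outer measures add up to one, and so is every event built from them.
-/

open MeasureTheory ProbabilityTheory

section NullMeasurable

variable {Ω α : Type*} [MeasurableSpace Ω] {P : Measure Ω}

theorem nullMeasurableSet_preimage_of_tsum_measure_fiber [IsFiniteMeasure P] [Countable α]
    {f : Ω → α} (hf : ∑' a, P (f ⁻¹' {a}) = P Set.univ) (s : Set α) :
    NullMeasurableSet (f ⁻¹' s) P := by
  have hfiber (a : α) : NullMeasurableSet (f ⁻¹' {a}) P := by
    set u := toMeasurable P (f ⁻¹' {a})
    set w := toMeasurable P (f ⁻¹' {a}ᶜ)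
    have hw : MeasurableSet w := measurableSet_toMeasurable P _
    have hcompl : P (f ⁻¹' {a}ᶜ) ≤ ∑' b : ↥({a}ᶜ : Set α), P (f ⁻¹' {(b : α)}) := by
      rw [← Set.biUnion_preimage_singleton]
      exact measure_biUnion_le P (Set.to_countable _) _
    have hcover : u ∪ w = Set.univ := Set.eq_univ_of_forall fun ω => by
      by_cases h : f ω = a
      · exact Or.inl (subset_toMeasurable P _ h)
      · exact Or.inr (subset_toMeasurable P _ h)
    -- the fibers exhaust the mass, so the measurable hulls of a fiber and of its complement
    -- overlap in a null set
    have hinter : P (u ∩ w) = 0 := by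
      have hsum : P Set.univ + P (u ∩ w) ≤ P Set.univ + 0 := by
        rw [← hcover, measure_union_add_inter u hw, hcover, add_zero, measure_toMeasurable,
          measure_toMeasurable, ← hf,
          ← ENNReal.summable.tsum_add_tsum_compl (s := {a}) ENNReal.summable,
          tsum_singleton a fun b => P (f ⁻¹' {b})]
        exact add_le_add_right hcompl _
      exact nonpos_iff_eq_zero.1 ((ENNReal.add_le_add_iff_left (measure_ne_top P _)).1 hsum)
    refine (hw.compl.nullMeasurableSet).congr (ae_eq_set.2 ⟨?_, ?_⟩)
    · convert measure_empty (μ := P)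
      exact Set.eq_empty_of_forall_notMem fun ω hω => hω.1 (subset_toMeasurable P _ hω.2)
    · exact measure_mono_null (t := u ∩ w)
        (fun ω hω => ⟨subset_toMeasurable P _ hω.1, not_not.1 hω.2⟩) hinter
  rw [← Set.biUnion_preimage_singleton]
  exact .biUnion (Set.to_countable s) fun a _ => hfiber a

end NullMeasurable

theorem integral_natCast_geometricMeasure {p : unitInterval} (hp : p ≠ 0) :
    ∫ n, (n : ℝ) ∂geometricMeasure p = (1 - p) / p := by
  have hp0 : (p : ℝ) ≠ 0 := unitInterval.coe_ne_zero.2 hp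
  have hr : ‖(1 - p : ℝ)‖ < 1 := by
    rw [Real.norm_eq_abs, abs_lt]
    constructor <;> linarith [p.2.2, lt_of_le_of_ne p.2.1 (Ne.symm hp0)]
  rw [integral_geometricMeasure hp]
  calc ∑' n : ℕ, ((1 - p : ℝ) ^ n * p) • (n : ℝ) = (∑' n : ℕ, (n : ℝ) * (1 - p) ^ n) * p := by
        rw [← tsum_mul_right]
        exact tsum_congr fun n => by rw [smul_eq_mul]; ring
    _ = (1 - p) / p := by
        rw [tsum_coe_mul_geometric_of_norm_lt_one hr, sub_sub_cancel]
        field_simp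

theorem map_eq_geometricMeasure {Ω : Type*} [MeasurableSpace Ω] {P : Measure Ω}
    [IsProbabilityMeasure P] {f : Ω → ℕ} {p : unitInterval} (hp : p ≠ 0)
    (hf : ∀ n, P {ω | f ω = n} = ENNReal.ofReal ((1 - p) ^ n * p)) :
    P.map f = geometricMeasure p := by
  have htsum : ∑' n, P {ω | f ω = n} = P Set.univ := by
    rw [tsum_congr hf, ← ENNReal.ofReal_tsum_of_nonneg (geometricMeasure_nonneg p)
      (hasSum_one_geometricMeasure hp).summable, (hasSum_one_geometricMeasure hp).tsum_eq,
      ENNReal.ofReal_one, measure_univ]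
  have hmeas : AEMeasurable f P := NullMeasurable.aemeasurable fun s _ =>
    nullMeasurableSet_preimage_of_tsum_measure_fiber htsum s
  refine Measure.ext_of_singleton fun n => ?_
  rw [Measure.map_apply₀ hmeas (MeasurableSet.singleton n).nullMeasurableSet,
    geometricMeasure_singleton hp]
  exact hf n

theorem integral_natCast_eq_of_measure_eq_geometric {Ω : Type*} [MeasurableSpace Ω]
    {P : Measure Ω} [IsProbabilityMeasure P] {f : Ω → ℕ} {p : unitInterval} (hp : p ≠ 0)
    (hf : ∀ n, P {ω | f ω = n} = ENNReal.ofReal ((1 - p) ^ n * p)) :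
    ∫ ω, (f ω : ℝ) ∂P = (1 - p) / p := by
  have hmap := map_eq_geometricMeasure hp hf
  have hmeas : AEMeasurable f P := .of_map_ne_zero (hmap ▸ IsProbabilityMeasure.ne_zero _)
  rw [← integral_map hmeas (measurable_from_nat (f := Nat.cast)).aestronglyMeasurable, hmap,
    integral_natCast_geometricMeasure hp]

theorem sum_pi_fin_succ {β M : Type*} [Fintype β] [AddCommMonoid M] (n : ℕ)
    (F : (Fin (n + 1) → β) → M) :
    ∑ h : Fin (n + 1) → β, F h = ∑ h : Fin n → β, ∑ x : β, F (Fin.snoc h x) := by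
  rw [← (Fin.snocEquiv fun _ => β).sum_comp, Fintype.sum_prod_type, Finset.sum_comm]
  rfl

section History

variable {Ω β : Type*} (d : ℕ → Ω → β)

def history (n : ℕ) (ω : Ω) : Fin n → β := fun k => d k ω

lemma history_succ (n : ℕ) (ω : Ω) :
    history d (n + 1) ω = Fin.snoc (history d n ω) (d n ω) := by
  funext k
  induction k using Fin.lastCases <;> simp [history]

lemma preimage_history_singleton (n : ℕ) (h : Fin n → β) :
    history d n ⁻¹' {h} = {ω | ∀ k : Fin n, d k ω = h k} := by
  ext ω
  simp [history, funext_iff]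

lemma preimage_history_snoc (n : ℕ) (h : Fin n → β) (x : β) :
    history d (n + 1) ⁻¹' {Fin.snoc h x} = {ω | d n ω = x ∧ ∀ k : Fin n, d k ω = h k} := by
  ext ω
  simp only [Set.mem_preimage, Set.mem_singleton_iff, history_succ, Fin.snoc_inj]
  simp [and_comm, history, funext_iff]

def DependsOnFirst (n : ℕ) (A : Set Ω) : Prop :=
  ∀ ⦃ω ω'⦄, (∀ k < n, d k ω = d k ω') → ω ∈ A → ω' ∈ A

variable {d}

lemma DependsOnFirst.preimage_image_history {n : ℕ} {A : Set Ω} (hA : DependsOnFirst d n A) :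
    history d n ⁻¹' (history d n '' A) = A := by
  refine Set.Subset.antisymm ?_ (Set.subset_preimage_image _ _)
  rintro ω' ⟨ω, hω, heq⟩
  exact hA (fun k hk => congrFun heq ⟨k, hk⟩) hω

lemma DependsOnFirst.inter_choice {n : ℕ} {A : Set Ω} (hA : DependsOnFirst d n A) (x : β) :
    DependsOnFirst d (n + 1) (A ∩ {ω | d n ω = x}) := fun _ _ heq hω =>
  ⟨hA (fun k hk => heq k (hk.trans n.lt_succ_self)) hω.1, (heq n n.lt_succ_self).symm.trans hω.2⟩

/-- Cylinder sets need not be measurable, so this additivity is not automatic. -/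
def HistoryConsistent [Fintype β] [MeasurableSpace Ω] (P : Measure Ω) (d : ℕ → Ω → β) : Prop :=
  ∀ n h, ∑ x, P (history d (n + 1) ⁻¹' {Fin.snoc h x}) = P (history d n ⁻¹' {h})

variable [Fintype β] [MeasurableSpace Ω] {P : Measure Ω} [IsProbabilityMeasure P]

lemma HistoryConsistent.sum_measure_preimage_singleton (hd : HistoryConsistent P d) (n : ℕ) :
    ∑ h : Fin n → β, P (history d n ⁻¹' {h}) = 1 := by
  induction n with
  | zero =>
    have : history d 0 ⁻¹' {default} = Set.univ :=
      Set.eq_univ_of_forall fun ω => Subsingleton.elim (history d 0 ω) default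
    rw [Fintype.sum_unique, this, measure_univ]
  | succ n ih => rw [sum_pi_fin_succ, ← ih]; exact Finset.sum_congr rfl fun h _ => hd n h

lemma HistoryConsistent.nullMeasurableSet_preimage (hd : HistoryConsistent P d) (n : ℕ)
    (Q : Set (Fin n → β)) : NullMeasurableSet (history d n ⁻¹' Q) P :=
  nullMeasurableSet_preimage_of_tsum_measure_fiber
    (by rw [tsum_fintype, hd.sum_measure_preimage_singleton, measure_univ]) Q

lemma HistoryConsistent.measure_preimage (hd : HistoryConsistent P d) {n : ℕ} (T : Finset (Fin n → β)) :
    P (history d n ⁻¹' T) = ∑ h ∈ T, P (history d n ⁻¹' {h}) := by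
  rw [← Finset.set_biUnion_preimage_singleton, measure_biUnion_finset₀
    (Set.pairwiseDisjoint_fiber _ _).aedisjoint
    fun h _ => hd.nullMeasurableSet_preimage n _]

lemma HistoryConsistent.measure_preimage_inter (hd : HistoryConsistent P d) {n : ℕ} (T : Finset (Fin n → β)) (x : β) :
    P (history d n ⁻¹' T ∩ {ω | d n ω = x})
      = ∑ h ∈ T, P (history d (n + 1) ⁻¹' {Fin.snoc h x}) := by
  have hunion : history d n ⁻¹' T ∩ {ω | d n ω = x}
      = ⋃ h ∈ T, history d (n + 1) ⁻¹' {Fin.snoc h x} := by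
    ext ω
    simp [history_succ, Fin.snoc_inj]
  rw [hunion, measure_biUnion_finset₀]
  · exact fun h _ h' _ hne => Disjoint.aedisjoint <| Disjoint.preimage _ <|
      Set.disjoint_singleton.2 ((Fin.snoc_left_injective (α := fun _ => β) x).ne hne)
  · exact fun h _ => hd.nullMeasurableSet_preimage _ _

lemma HistoryConsistent.nullMeasurableSet (hd : HistoryConsistent P d) {n : ℕ} {A : Set Ω} (hA : DependsOnFirst d n A) : NullMeasurableSet A P :=
  hA.preimage_image_history ▸ hd.nullMeasurableSet_preimage n _

end History

section MNL

variable {α : Type*} [DecidableEq α]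

noncomputable def mnlProb (v : α → ℝ) (s : Finset α) : Option α → ℝ
  | none => 1 / (1 + ∑ k ∈ s, v k)
  | some j => (if j ∈ s then v j else 0) / (1 + ∑ k ∈ s, v k)

variable {v : α → ℝ} {s : Finset α}

lemma mnlProb_nonneg (hv : ∀ j, 0 ≤ v j) (x : Option α) : 0 ≤ mnlProb v s x := by
  have : 0 ≤ 1 + ∑ k ∈ s, v k := add_nonneg zero_le_one (Finset.sum_nonneg fun k _ => hv k)
  cases x with
  | none => exact div_nonneg zero_le_one this
  | some j => exact div_nonneg (by split_ifs <;> simp [hv j]) this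

lemma sum_mnlProb [Fintype α] (hv : ∀ j, 0 ≤ v j) : ∑ x, mnlProb v s x = 1 := by
  have : 0 < 1 + ∑ k ∈ s, v k := by linarith [Finset.sum_nonneg fun k (_ : k ∈ s) => hv k]
  rw [Fintype.sum_option]
  simp only [mnlProb]
  rw [← Finset.sum_div, Finset.sum_ite_mem, Finset.univ_inter, ← add_div, div_self this.ne']

lemma mnlProb_some_of_mem {j : α} (hj : j ∈ s) : mnlProb v s (some j) = v j * mnlProb v s none := by
  rw [mnlProb, mnlProb, if_pos hj, mul_one_div]

lemma div_one_add_sum_le_mnlProb [Fintype α] (hv : ∀ j, 0 ≤ v j) {j : α} (hj : j ∈ s) :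
    v j / (1 + ∑ k, v k) ≤ mnlProb v s (some j) := by
  have hpos : 0 < 1 + ∑ k ∈ s, v k := by linarith [Finset.sum_nonneg fun k (_ : k ∈ s) => hv k]
  rw [mnlProb, if_pos hj]
  exact div_le_div_of_nonneg_left (hv j) hpos (add_le_add_right
    (Finset.sum_le_sum_of_subset_of_nonneg s.subset_univ fun k _ _ => hv k) 1)

end MNL

section MNLProcess

variable {Ω α : Type*} [MeasurableSpace Ω] [Fintype α] [DecidableEq α]

def IsMNLProcess (P : Measure Ω) (v : α → ℝ) (S : (n : ℕ) → (Fin n → Option α) → Finset α)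
    (d : ℕ → Ω → Option α) : Prop :=
  ∀ n h x, P (history d (n + 1) ⁻¹' {Fin.snoc h x})
    = ENNReal.ofReal (mnlProb v (S n h) x) * P (history d n ⁻¹' {h})

variable {P : Measure Ω} {v : α → ℝ} {d : ℕ → Ω → Option α}
  {S : (n : ℕ) → (Fin n → Option α) → Finset α}

lemma IsMNLProcess.historyConsistent (hd : IsMNLProcess P v S d) (hv : ∀ j, 0 ≤ v j) :
    HistoryConsistent P d := by
  intro n h
  simp_rw [hd n h, ← Finset.sum_mul,
    ← ENNReal.ofReal_sum_of_nonneg fun x _ => mnlProb_nonneg hv x, sum_mnlProb hv,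
    ENNReal.ofReal_one, one_mul]

variable [IsProbabilityMeasure P]

lemma IsMNLProcess.measure_inter_eq_sum (hd : IsMNLProcess P v S d) (hv : ∀ j, 0 ≤ v j) {n : ℕ}
    (T : Finset (Fin n → Option α)) (x : Option α) :
    P (history d n ⁻¹' T ∩ {ω | d n ω = x})
      = ∑ h ∈ T, ENNReal.ofReal (mnlProb v (S n h) x) * P (history d n ⁻¹' {h}) := by
  rw [(hd.historyConsistent hv).measure_preimage_inter]
  exact Finset.sum_congr rfl fun h _ => hd n h x

theorem IsMNLProcess.measure_inter_some_eq (hd : IsMNLProcess P v S d) (hv : ∀ j, 0 ≤ v j)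
    {i : α} (hiS : ∀ n h, i ∈ S n h) {n : ℕ} {A : Set Ω} (hA : DependsOnFirst d n A) :
    P (A ∩ {ω | d n ω = some i}) = ENNReal.ofReal (v i) * P (A ∩ {ω | d n ω = none}) := by
  rw [← hA.preimage_image_history, ← (Set.toFinite (history d n '' A)).coe_toFinset,
    hd.measure_inter_eq_sum hv, hd.measure_inter_eq_sum hv, Finset.mul_sum]
  refine Finset.sum_congr rfl fun h _ => ?_
  rw [mnlProb_some_of_mem (hiS n h), ENNReal.ofReal_mul (hv i), mul_assoc]

theorem IsMNLProcess.le_measure_inter_some (hd : IsMNLProcess P v S d) (hv : ∀ j, 0 ≤ v j)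
    {i : α} (hiS : ∀ n h, i ∈ S n h) {n : ℕ} {A : Set Ω} (hA : DependsOnFirst d n A) :
    ENNReal.ofReal (v i / (1 + ∑ k, v k)) * P A ≤ P (A ∩ {ω | d n ω = some i}) := by
  rw [← hA.preimage_image_history, ← (Set.toFinite (history d n '' A)).coe_toFinset,
    hd.measure_inter_eq_sum hv, (hd.historyConsistent hv).measure_preimage, Finset.mul_sum]
  gcongr with h
  exact div_one_add_sum_le_mnlProb hv (hiS n h)

end MNLProcess

section Purchases

variable {Ω α : Type*} (i : α) (d : ℕ → Ω → Option α)

def notPurchasedBefore (n : ℕ) : Set Ω := {ω | ∀ k < n, d k ω ≠ some i}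

def noPurchaseCount (n : ℕ) (ω : Ω) : ℕ := Nat.count (fun k => d k ω = none) n

def waitState (n m : ℕ) : Set Ω := notPurchasedBefore i d n ∩ {ω | noPurchaseCount d n ω = m}

def neverPurchased : Set Ω := {ω | ∀ n, d n ω ≠ some i}

noncomputable def numNoPurchasesBefore (ω : Ω) : ℕ :=
  Set.ncard {k | d k ω = none ∧ ∀ m ≤ k, d m ω ≠ some i}

variable {i d}

lemma noPurchaseCount_congr {n : ℕ} {ω ω' : Ω} (heq : ∀ k < n, d k ω = d k ω') :
    noPurchaseCount d n ω = noPurchaseCount d n ω' := by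
  simp only [noPurchaseCount, Nat.count_eq_card_filter_range]
  exact congrArg _ (Finset.filter_congr fun k hk => by rw [heq k (Finset.mem_range.1 hk)])

lemma dependsOnFirst_notPurchasedBefore (n : ℕ) :
    DependsOnFirst d n (notPurchasedBefore i d n) := fun _ _ heq hω k hk =>
  heq k hk ▸ hω k hk

lemma dependsOnFirst_waitState (n m : ℕ) : DependsOnFirst d n (waitState i d n m) :=
  fun _ _ heq hω => ⟨dependsOnFirst_notPurchasedBefore n heq hω.1,
    (noPurchaseCount_congr heq).symm.trans hω.2⟩

lemma mem_notPurchasedBefore_iff_le_find [DecidableEq α] {ω : Ω} (hω : ∃ k, d k ω = some i)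
    {n : ℕ} :
    ω ∈ notPurchasedBefore i d n ↔ n ≤ Nat.find hω :=
  (Nat.le_find_iff hω n).symm

lemma mem_notPurchasedBefore_inter_some_iff [DecidableEq α] {ω : Ω} {n : ℕ} :
    ω ∈ notPurchasedBefore i d n ∩ {ω | d n ω = some i}
      ↔ ∃ hω : ∃ k, d k ω = some i, Nat.find hω = n :=
  ⟨fun h => ⟨⟨n, h.2⟩, (Nat.find_eq_iff _).2 ⟨h.2, h.1⟩⟩,
    fun ⟨hω, hn⟩ => ⟨fun _ hk => Nat.find_min hω (hn ▸ hk), hn ▸ Nat.find_spec hω⟩⟩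

lemma nth_eq_of_mem_waitState_inter_none {ω : Ω} {n m : ℕ}
    (h : ω ∈ waitState i d n m ∩ {ω | d n ω = none}) :
    Nat.nth (fun k => d k ω = none) m = n :=
  h.1.2 ▸ Nat.nth_count h.2

lemma numNoPurchasesBefore_eq [DecidableEq α] {ω : Ω} (hω : ∃ k, d k ω = some i) :
    numNoPurchasesBefore i d ω = noPurchaseCount d (Nat.find hω) ω := by
  have hset : {k | d k ω = none ∧ ∀ m ≤ k, d m ω ≠ some i}
      = ↑((Finset.range (Nat.find hω)).filter fun k => d k ω = none) := by
    ext k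
    simp [Nat.lt_find_iff hω, and_comm]
  rw [numNoPurchasesBefore, hset, Set.ncard_coe_finset, noPurchaseCount,
    Nat.count_eq_card_filter_range]

lemma exists_mem_waitState_inter_some_iff [DecidableEq α] {ω : Ω} (hω : ∃ k, d k ω = some i)
    {m : ℕ} :
    (∃ n, ω ∈ waitState i d n m ∩ {ω | d n ω = some i}) ↔ numNoPurchasesBefore i d ω = m := by
  rw [numNoPurchasesBefore_eq hω]
  constructor
  · rintro ⟨n, ⟨hn, hm⟩, hi⟩
    obtain ⟨_, rfl⟩ := mem_notPurchasedBefore_inter_some_iff.1 ⟨hn, hi⟩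
    exact hm
  · intro hm
    obtain ⟨hn, hi⟩ := mem_notPurchasedBefore_inter_some_iff.2 ⟨hω, rfl⟩
    exact ⟨_, ⟨hn, hm⟩, hi⟩

lemma exists_mem_waitState_inter_none_iff [DecidableEq α] {ω : Ω} (hω : ∃ k, d k ω = some i)
    {m : ℕ} :
    (∃ n, ω ∈ waitState i d n m ∩ {ω | d n ω = none}) ↔ m < numNoPurchasesBefore i d ω := by
  rw [numNoPurchasesBefore_eq hω]
  constructor
  · rintro ⟨n, ⟨hn, rfl⟩, hnone : d n ω = none⟩
    have hlt : n < Nat.find hω := lt_of_le_of_ne ((mem_notPurchasedBefore_iff_le_find hω).1 hn)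
      fun h => by rw [h, Nat.find_spec hω] at hnone; cases hnone
    exact Nat.count_strict_mono hnone hlt
  · intro hm
    -- the `m`-th no-purchase (counting from zero) happens before the first purchase of `i`
    have hcard : ∀ hf : (Set.ofPred fun k => d k ω = none).Finite, m < hf.toFinset.card :=
      fun hf => hm.trans_le (Nat.count_le_card hf _)
    have hlt := Nat.nth_lt_of_lt_count hm
    exact ⟨_, ⟨(mem_notPurchasedBefore_iff_le_find hω).2 hlt.le, Nat.count_nth hcard⟩,
      Nat.nth_mem m hcard⟩

lemma pairwise_disjoint_notPurchasedBefore_inter_some [DecidableEq α] :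
    Pairwise (Function.onFun Disjoint fun n => notPurchasedBefore i d n ∩ {ω | d n ω = some i}) :=
  fun _ _ hne => Set.disjoint_left.2 fun _ h h' => hne <| by
    obtain ⟨_, rfl⟩ := mem_notPurchasedBefore_inter_some_iff.1 h
    obtain ⟨_, rfl⟩ := mem_notPurchasedBefore_inter_some_iff.1 h'
    rfl

lemma pairwise_disjoint_waitState_inter_some [DecidableEq α] (m : ℕ) :
    Pairwise (Function.onFun Disjoint fun n => waitState i d n m ∩ {ω | d n ω = some i}) :=
  fun _ _ hne => (pairwise_disjoint_notPurchasedBefore_inter_some hne).mono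
    (Set.inter_subset_inter_left _ Set.inter_subset_left)
    (Set.inter_subset_inter_left _ Set.inter_subset_left)

lemma pairwise_disjoint_waitState_inter_none (m : ℕ) :
    Pairwise (Function.onFun Disjoint fun n => waitState i d n m ∩ {ω | d n ω = none}) :=
  fun _ _ hne => Set.disjoint_left.2 fun _ h h' =>
    hne ((nth_eq_of_mem_waitState_inter_none h).symm.trans (nth_eq_of_mem_waitState_inter_none h'))

end Purchases

section Geometric

variable {Ω α : Type*} [MeasurableSpace Ω] {P : Measure Ω} [IsProbabilityMeasure P] [Fintype α]
  [DecidableEq α] {v : α → ℝ} {d : ℕ → Ω → Option α}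
  {S : (n : ℕ) → (Fin n → Option α) → Finset α} {i : α}

theorem IsMNLProcess.measure_neverPurchased (hd : IsMNLProcess P v S d) (hv : ∀ j, 0 < v j)
    (hiS : ∀ n h, i ∈ S n h) : P (neverPurchased i d) = 0 := by
  have hv0 : ∀ j, 0 ≤ v j := fun j => (hv j).le
  set δ := v i / (1 + ∑ k, v k)
  have hδ : 0 < δ :=
    div_pos (hv i) (add_pos_of_pos_of_nonneg one_pos (Finset.sum_nonneg fun k _ => hv0 k))
  set F : ℕ → Set Ω := fun n => notPurchasedBefore i d n ∩ {ω | d n ω = some i}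
  -- while `i` is unsold each customer buys it with probability at least `δ`, and the events `F n`
  -- (the first purchase of `i` is made by customer `n`) are disjoint
  have hle (n : ℕ) : ENNReal.ofReal δ * P (neverPurchased i d) ≤ P (F n) :=
    le_trans (by gcongr; exact fun _ hω k _ => hω k)
      (hd.le_measure_inter_some hv0 hiS (dependsOnFirst_notPurchasedBefore n))
  have hsum : ∑' n, P (F n) ≤ 1 :=
    (tsum_meas_le_meas_iUnion_of_disjoint₀ P
      (fun n => (hd.historyConsistent hv0).nullMeasurableSet
        ((dependsOnFirst_notPurchasedBefore n).inter_choice _))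
      fun _ _ hne => (pairwise_disjoint_notPurchasedBefore_inter_some hne).aedisjoint).trans
      prob_le_one
  by_contra h
  have htop : ∑' _ : ℕ, ENNReal.ofReal δ * P (neverPurchased i d) = ⊤ :=
    ENNReal.tsum_const_eq_top_of_ne_zero (mul_ne_zero (ENNReal.ofReal_pos.2 hδ).ne' h)
  exact absurd ((ENNReal.tsum_le_tsum hle).trans hsum) (by simp [htop])

lemma IsMNLProcess.ae_exists_purchase (hd : IsMNLProcess P v S d) (hv : ∀ j, 0 < v j)
    (hiS : ∀ n h, i ∈ S n h) : ∀ᵐ ω ∂P, ∃ k, d k ω = some i := by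
  filter_upwards [measure_eq_zero_iff_ae_notMem.1 (hd.measure_neverPurchased hv hiS)] with ω hω
  simpa [neverPurchased] using hω

lemma IsMNLProcess.numNoPurchasesBefore_eq_ae_eq (hd : IsMNLProcess P v S d) (hv : ∀ j, 0 < v j)
    (hiS : ∀ n h, i ∈ S n h) (m : ℕ) :
    {ω | numNoPurchasesBefore i d ω = m} =ᵐ[P] ⋃ n, waitState i d n m ∩ {ω | d n ω = some i} :=
  Filter.eventuallyEq_set.2 <| (hd.ae_exists_purchase hv hiS).mono fun _ hω =>
    (Set.mem_iUnion.trans (exists_mem_waitState_inter_some_iff hω)).symm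

lemma IsMNLProcess.lt_numNoPurchasesBefore_ae_eq (hd : IsMNLProcess P v S d) (hv : ∀ j, 0 < v j)
    (hiS : ∀ n h, i ∈ S n h) (m : ℕ) :
    {ω | m < numNoPurchasesBefore i d ω} =ᵐ[P] ⋃ n, waitState i d n m ∩ {ω | d n ω = none} :=
  Filter.eventuallyEq_set.2 <| (hd.ae_exists_purchase hv hiS).mono fun _ hω =>
    (Set.mem_iUnion.trans (exists_mem_waitState_inter_none_iff hω)).symm

lemma IsMNLProcess.nullMeasurableSet_waitState_inter (hd : IsMNLProcess P v S d)
    (hv : ∀ j, 0 < v j) (n m : ℕ) (x : Option α) :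
    NullMeasurableSet (waitState i d n m ∩ {ω | d n ω = x}) P :=
  (hd.historyConsistent fun j => (hv j).le).nullMeasurableSet
    ((dependsOnFirst_waitState n m).inter_choice x)

theorem IsMNLProcess.measure_numNoPurchasesBefore_eq_mul (hd : IsMNLProcess P v S d)
    (hv : ∀ j, 0 < v j) (hiS : ∀ n h, i ∈ S n h) (m : ℕ) :
    P {ω | numNoPurchasesBefore i d ω = m}
      = ENNReal.ofReal (v i) * P {ω | m < numNoPurchasesBefore i d ω} := by
  rw [measure_congr (hd.numNoPurchasesBefore_eq_ae_eq hv hiS m),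
    measure_congr (hd.lt_numNoPurchasesBefore_ae_eq hv hiS m),
    measure_iUnion₀ (fun _ _ hne => (pairwise_disjoint_waitState_inter_some m hne).aedisjoint)
      fun n => hd.nullMeasurableSet_waitState_inter hv n m _,
    measure_iUnion₀ (fun _ _ hne => (pairwise_disjoint_waitState_inter_none m hne).aedisjoint)
      fun n => hd.nullMeasurableSet_waitState_inter hv n m _, ← ENNReal.tsum_mul_left]
  exact tsum_congr fun n =>
    hd.measure_inter_some_eq (fun j => (hv j).le) hiS (dependsOnFirst_waitState n m)

lemma IsMNLProcess.measure_le_numNoPurchasesBefore_eq_mul (hd : IsMNLProcess P v S d)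
    (hv : ∀ j, 0 < v j) (hiS : ∀ n h, i ∈ S n h) (m : ℕ) :
    P {ω | m ≤ numNoPurchasesBefore i d ω}
      = ENNReal.ofReal (1 + v i) * P {ω | m + 1 ≤ numNoPurchasesBefore i d ω} := by
  have hnull : NullMeasurableSet {ω | m < numNoPurchasesBefore i d ω} P :=
    (NullMeasurableSet.iUnion fun n => hd.nullMeasurableSet_waitState_inter hv n m none).congr
      (hd.lt_numNoPurchasesBefore_ae_eq hv hiS m).symm
  have hunion : {ω | m ≤ numNoPurchasesBefore i d ω}
      = {ω | numNoPurchasesBefore i d ω = m} ∪ {ω | m < numNoPurchasesBefore i d ω} := by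
    ext ω
    simp [le_iff_eq_or_lt, eq_comm]
  have hdisj : Disjoint {ω | numNoPurchasesBefore i d ω = m}
      {ω | m < numNoPurchasesBefore i d ω} :=
    Set.disjoint_left.2 fun _ h h' => (h'.trans_eq h).false
  rw [hunion, measure_union₀ hnull hdisj.aedisjoint, hd.measure_numNoPurchasesBefore_eq_mul hv hiS,
    ENNReal.ofReal_add zero_le_one (hv i).le, ENNReal.ofReal_one, add_mul, one_mul, add_comm]
  rfl

theorem IsMNLProcess.measure_le_numNoPurchasesBefore (hd : IsMNLProcess P v S d)
    (hv : ∀ j, 0 < v j) (hiS : ∀ n h, i ∈ S n h) (m : ℕ) :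
    P {ω | m ≤ numNoPurchasesBefore i d ω} = ENNReal.ofReal ((1 / (1 + v i)) ^ m) := by
  have hvi : 0 < 1 + v i := by linarith [hv i]
  induction m with
  | zero => simp
  | succ m ih =>
    refine (ENNReal.mul_right_inj (ENNReal.ofReal_pos.2 hvi).ne' ENNReal.ofReal_ne_top).1 ?_
    rw [← hd.measure_le_numNoPurchasesBefore_eq_mul hv hiS, ih, ← ENNReal.ofReal_mul hvi.le,
      pow_succ, mul_left_comm, mul_one_div_cancel hvi.ne', mul_one]

theorem IsMNLProcess.measure_numNoPurchasesBefore_eq (hd : IsMNLProcess P v S d)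
    (hv : ∀ j, 0 < v j) (hiS : ∀ n h, i ∈ S n h) (m : ℕ) :
    P {ω | numNoPurchasesBefore i d ω = m}
      = ENNReal.ofReal ((1 / (1 + v i)) ^ m * (v i / (1 + v i))) := by
  have htail : P {ω | m < numNoPurchasesBefore i d ω}
      = ENNReal.ofReal ((1 / (1 + v i)) ^ (m + 1)) :=
    hd.measure_le_numNoPurchasesBefore hv hiS (m + 1)
  rw [hd.measure_numNoPurchasesBefore_eq_mul hv hiS, htail, ← ENNReal.ofReal_mul (hv i).le]
  congr 1
  ring

end Geometric

/-- In an MNL choice model with history-dependent assortments all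
containing product `i`, the number of no-purchases strictly before the first
purchase of product `i` is geometric with parameter `v i / (1 + v i)` and has
mean `1 / v i`. -/
theorem stmt_0
    {Ω : Type*} [MeasurableSpace Ω] (P : Measure Ω) [IsProbabilityMeasure P]
    (N : ℕ) (v : Fin N → ℝ) (hv : ∀ j, 0 < v j) (i : Fin N)
    (d : ℕ → Ω → Option (Fin N))
    (S : (n : ℕ) → (Fin n → Option (Fin N)) → Finset (Fin N))
    (hiS : ∀ n h, i ∈ S n h)
    (hchoice : ∀ (n : ℕ) (h : Fin n → Option (Fin N)),
      (∀ j : Fin N,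
        P {ω | d n ω = some j ∧ ∀ k : Fin n, d k.1 ω = h k}
          = ENNReal.ofReal ((if j ∈ S n h then v j else 0) / (1 + ∑ k ∈ S n h, v k))
              * P {ω | ∀ k : Fin n, d k.1 ω = h k})
      ∧ P {ω | d n ω = none ∧ ∀ k : Fin n, d k.1 ω = h k}
          = ENNReal.ofReal (1 / (1 + ∑ k ∈ S n h, v k))
              * P {ω | ∀ k : Fin n, d k.1 ω = h k})
    (μi : Ω → ℕ)
    (hμi : ∀ ω, μi ω = Set.ncard {k : ℕ | d k ω = none ∧ ∀ m ≤ k, d m ω ≠ some i}) :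
    (∀ m : ℕ,
      P {ω | μi ω = m}
        = ENNReal.ofReal ((1 / (1 + v i)) ^ m * (v i / (1 + v i))))
    ∧ ∫ ω, (μi ω : ℝ) ∂P = 1 / v i := by
  have hd : IsMNLProcess P v S d := by
    rintro n h (_ | j) <;> rw [preimage_history_snoc, preimage_history_singleton]
    exacts [(hchoice n h).2, (hchoice n h).1 j]
  obtain rfl : μi = numNoPurchasesBefore i d := funext hμi
  have hlaw := hd.measure_numNoPurchasesBefore_eq hv hiS
  have hvi : 0 < 1 + v i := by linarith [hv i]
  let p : unitInterval := ⟨v i / (1 + v i), (div_pos (hv i) hvi).le,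
    (div_le_one hvi).2 (by linarith)⟩
  have hp : p ≠ 0 := unitInterval.coe_ne_zero.1 (div_pos (hv i) hvi).ne'
  have h1p : 1 - (p : ℝ) = 1 / (1 + v i) := by
    simp only [p]
    field_simp
    ring
  refine ⟨hlaw, ?_⟩
  rw [integral_natCast_eq_of_measure_eq_geometric hp fun m => by rw [h1p]; exact hlaw m, h1p]
  simp only [p]
  field_simp
end

section
/- Consider the single-customer MNL expected revenue Ř(S; v, r) = Σ_{i∈S} r_i v_i / (1 + Σ_{j∈S} v_j) for an assortment S ⊆ [N], attraction parameters v ∈ (0,∞)^N, and profits r ∈ [0,1]^N. If v ≤ v' componentwise, then max_{S ∈ 𝒮} Ř(S; v, r) ≤ max_{S ∈ 𝒮} Ř(S; v', r) for any family 𝒮 of assortments closed under taking subsets. More precisely, for any fixed S, if v'_i ≥ v_i for a single coordinate i ∈ S and Ř(S; v, r) ≤ r_i, then Ř(S; v', r) ≥ Ř(S; v, r). -/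
/-!
Writing `R = Ř(S; v, r)`, a direct computation gives
`Ř(S; v', r) - R = (∑_{j ∈ S} (r_j - R) (v'_j - v_j)) / (1 + ∑_{j ∈ S} v'_j)`,
so raising the attractions of products whose profit is at least the current revenue cannot
lower it. In an optimal assortment `S` of a subset-closed family, dropping a product `i` cannot
increase the revenue, which forces `r_i ≥ R`; hence raising all attractions does not decrease the
revenue of `S`, and a fortiori not the optimum.
-/

/-- Single-customer MNL expected revenue of assortment `S` with attraction
parameters `v` and unit profits `r` (no-purchase attraction normalized to 1). -/
noncomputable def mnlRev (N : ℕ) (S : Finset (Fin N)) (v r : Fin N → ℝ) : ℝ :=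
  (∑ i ∈ S, r i * v i) / (1 + ∑ j ∈ S, v j)

namespace MNL

variable {N : ℕ} {S : Finset (Fin N)} {v v' r : Fin N → ℝ}

lemma one_add_sum_pos (hv : ∀ j ∈ S, 0 ≤ v j) : 0 < 1 + ∑ j ∈ S, v j := by
  linarith [Finset.sum_nonneg hv]

lemma mnlRev_sub_mnlRev (hD : 1 + ∑ j ∈ S, v j ≠ 0) (hD' : 1 + ∑ j ∈ S, v' j ≠ 0) :
    mnlRev N S v' r - mnlRev N S v r =
      (∑ j ∈ S, (r j - mnlRev N S v r) * (v' j - v j)) / (1 + ∑ j ∈ S, v' j) := by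
  have hR : mnlRev N S v r * (1 + ∑ j ∈ S, v j) = ∑ j ∈ S, r j * v j :=
    div_mul_cancel₀ _ hD
  have hR' : mnlRev N S v' r * (1 + ∑ j ∈ S, v' j) = ∑ j ∈ S, r j * v' j :=
    div_mul_cancel₀ _ hD'
  rw [eq_div_iff hD']
  simp only [sub_mul, mul_sub, Finset.sum_sub_distrib, ← Finset.mul_sum]
  linear_combination hR' - hR

lemma mnlRev_le_mnlRev (hv : ∀ j ∈ S, 0 ≤ v j) (hvv' : ∀ j ∈ S, v j ≤ v' j)
    (h : ∀ j ∈ S, mnlRev N S v r ≤ r j ∨ v' j = v j) :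
    mnlRev N S v r ≤ mnlRev N S v' r := by
  have hD := one_add_sum_pos hv
  have hD' := one_add_sum_pos fun j hj => (hv j hj).trans (hvv' j hj)
  have hterm : ∀ j ∈ S, 0 ≤ (r j - mnlRev N S v r) * (v' j - v j) := by
    intro j hj
    rcases h j hj with hrj | hvj
    · exact mul_nonneg (sub_nonneg.2 hrj) (sub_nonneg.2 (hvv' j hj))
    · simp [hvj]
  rw [← sub_nonneg, mnlRev_sub_mnlRev hD.ne' hD'.ne']
  exact div_nonneg (Finset.sum_nonneg hterm) hD'.le

lemma mnlRev_erase_le_iff {i : Fin N} (hi : i ∈ S) (hv : ∀ j ∈ S, 0 ≤ v j) (hvi : 0 < v i) :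
    mnlRev N (S.erase i) v r ≤ mnlRev N S v r ↔ mnlRev N S v r ≤ r i := by
  have hD := one_add_sum_pos hv
  have hDe : 0 < 1 + ∑ j ∈ S.erase i, v j :=
    one_add_sum_pos fun j hj => hv j (Finset.mem_of_mem_erase hj)
  rw [Finset.sum_erase_eq_sub hi] at hDe
  rw [mnlRev, mnlRev, Finset.sum_erase_eq_sub hi, Finset.sum_erase_eq_sub hi,
    div_le_div_iff₀ hDe hD, div_le_iff₀ hD]
  constructor <;> intro h <;> nlinarith

end MNL

open MNL in
theorem stmt_12_general (N : ℕ) (v v' r : Fin N → ℝ)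
    (hv : ∀ j, 0 < v j) (hvv' : ∀ j, v j ≤ v' j)
    (𝒮 : Finset (Finset (Fin N))) (hne : 𝒮.Nonempty)
    (hclosed : ∀ S ∈ 𝒮, ∀ T ⊆ S, T ∈ 𝒮) :
    ((𝒮.sup' hne fun S => mnlRev N S v r)
        ≤ 𝒮.sup' hne fun S => mnlRev N S v' r)
    ∧ ∀ (S : Finset (Fin N)) (i : Fin N), i ∈ S →
        (∀ j, j ≠ i → v' j = v j) → mnlRev N S v r ≤ r i →
        mnlRev N S v r ≤ mnlRev N S v' r := by
  have hv₀ : ∀ (S : Finset (Fin N)), ∀ j ∈ S, 0 ≤ v j := fun _ j _ => (hv j).le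
  refine ⟨?_, fun S i _ hother hri => ?_⟩
  · obtain ⟨S, hS, hSmax⟩ := Finset.exists_mem_eq_sup' hne fun S => mnlRev N S v r
    have hprofit : ∀ i ∈ S, mnlRev N S v r ≤ r i := fun i hi =>
      (mnlRev_erase_le_iff hi (hv₀ S) (hv i)).1 <|
        hSmax ▸ Finset.le_sup' (fun S => mnlRev N S v r) (hclosed S hS _ (S.erase_subset i))
    rw [hSmax]
    exact (mnlRev_le_mnlRev (hv₀ S) (fun j _ => hvv' j) fun j hj => .inl (hprofit j hj)).trans
      (Finset.le_sup' (fun S => mnlRev N S v' r) hS)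
  · refine mnlRev_le_mnlRev (hv₀ S) (fun j _ => hvv' j) fun j _ => ?_
    by_cases hji : j = i
    · exact .inl (hji ▸ hri)
    · exact .inr (hother j hji)

/-- monotonicity of the optimal single-customer MNL revenue in
the attraction parameters over a subset-closed family of assortments, and the
key single-coordinate monotonicity step. -/
theorem stmt_12 (N : ℕ) (v v' r : Fin N → ℝ)
    (hv : ∀ j, 0 < v j) (hvv' : ∀ j, v j ≤ v' j)
    (hr0 : ∀ j, 0 ≤ r j) (hr1 : ∀ j, r j ≤ 1)
    (𝒮 : Finset (Finset (Fin N))) (hne : 𝒮.Nonempty)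
    (hclosed : ∀ S ∈ 𝒮, ∀ T ⊆ S, T ∈ 𝒮) :
    ((𝒮.sup' hne fun S => mnlRev N S v r)
        ≤ 𝒮.sup' hne fun S => mnlRev N S v' r)
    ∧ ∀ (S : Finset (Fin N)) (i : Fin N), i ∈ S →
        (∀ j, j ≠ i → v' j = v j) → mnlRev N S v r ≤ r i →
        mnlRev N S v r ≤ mnlRev N S v' r :=
  stmt_12_general N v v' r hv hvv' 𝒮 hne hclosed
end
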